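/- arXiv:2504.18280 — 2 statements merged into one kernel-verified Lean document; each statement's English description precedes it below -/
import Mathlib

section
/- Let w = u^p with u primitive. Then w is π-clustering for the ordered alphabet A if and only if u is π-clustering for A. -/
namespace BWTpaper

variable {A : Type*}

/-- Lexicographic `≤` (as a `Bool`) on lists, induced by a strict order `lt` on letters. -/
def lexLe (lt : A → A → Bool) : List A → List A → Bool
  | [], _ => true
  | _ :: _, [] => false
  | x :: xs, y :: ys => if lt x y then true else if lt y x then false else lexLe lt xs ys

/-- The list of all rotations (conjugates, with multiplicity) of a word. -/
def rotations (w : List A) : List (List A) := (List.range w.length).map (fun i => w.rotate i)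

/-- Burrows-Wheeler transform with respect to a strict order `lt` on letters. -/
def bwtBy (lt : A → A → Bool) (w : List A) : List A :=
  ((rotations w).mergeSort (lexLe lt)).filterMap List.getLast?

def stdLt [LinearOrder A] : A → A → Bool := fun x y => decide (x < y)

/-- Burrows-Wheeler transform w.r.t. the order of a `LinearOrder` alphabet. -/
def bwt [LinearOrder A] (w : List A) : List A := bwtBy stdLt w

def Conjugate (u v : List A) : Prop := ∃ x y : List A, u = x ++ y ∧ v = y ++ x

/-- `u^p`. -/
def wordPow (u : List A) (p : ℕ) : List A := (List.replicate p u).flatten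

def Primitive (w : List A) : Prop := w ≠ [] ∧ ∀ (u : List A) (k : ℕ), w = wordPow u k → k = 1

/-- The letters of the alphabet, sorted increasingly w.r.t. `lt`. -/
noncomputable def sortedAlphabet [Fintype A] (lt : A → A → Bool) : List A :=
  Finset.univ.toList.mergeSort (fun x y => !(lt y x))

/-- `w` is `π`-clustering w.r.t. the letter order `lt`:
its BWT is `π(a₁)^{k₁} ⋯ π(a_d)^{k_d}` where `a₁ < ⋯ < a_d` and `k_i = |w|_{π(a_i)}`. -/
def IsClusteringBy [Fintype A] [DecidableEq A] (lt : A → A → Bool) (π : Equiv.Perm A)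
    (w : List A) : Prop :=
  bwtBy lt w = (sortedAlphabet lt).flatMap (fun c => List.replicate (w.count (π c)) (π c))

def IsClustering [Fintype A] [LinearOrder A] (π : Equiv.Perm A) (w : List A) : Prop :=
  IsClusteringBy stdLt π w

/-- The prefix of length `n` of the periodic infinite word `u^ω`. -/
def omegaTake (u : List A) (n : ℕ) : List A := ((List.replicate n u).flatten).take n

/-- The ω-order: `u ≤_ω v` iff `u^ω ≤ v^ω` lexicographically (decided on the first
`|u| + |v|` letters, which suffices by Fine and Wilf). -/
def omegaLe (lt : A → A → Bool) (u v : List A) : Bool :=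
  lexLe lt (omegaTake u (u.length + v.length)) (omegaTake v (u.length + v.length))

/-- Extended Burrows-Wheeler transform of a multiset (list) of words. -/
def ebwtBy (lt : A → A → Bool) (W : List (List A)) : List A :=
  ((W.flatMap rotations).mergeSort (omegaLe lt)).filterMap List.getLast?

/-- A multiset of words is `π`-clustering if its eBWT consists of the blocks
`π(a₁)^{k₁} ⋯ π(a_d)^{k_d}` with `k_i` the total number of occurrences of `π(a_i)`. -/
def IsClusteringMultisetBy [Fintype A] [DecidableEq A] (lt : A → A → Bool)
    (π : Equiv.Perm A) (W : List (List A)) : Prop :=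
  ebwtBy lt W =
    (sortedAlphabet lt).flatMap
      (fun c => List.replicate ((W.map (fun w => w.count (π c))).sum) (π c))

/-- The morphism `α_{a,b} : a ↦ ab`, `c ↦ c` for `c ≠ a`. -/
def alphaM [DecidableEq A] (a b : A) (w : List A) : List A :=
  w.flatMap (fun c => if c = a then [a, b] else [c])

/-- The morphism `α̃_{a,b} : a ↦ ba`, `c ↦ c` for `c ≠ a`. -/
def tildeM [DecidableEq A] (a b : A) (w : List A) : List A :=
  w.flatMap (fun c => if c = a then [b, a] else [c])

/-!
Every rotation of `u^p` is the `p`-th power of a rotation of `u`, and each rotation `v` of `u`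
occurs exactly `p` times in this way. On words of a fixed length, `v ↦ v^p` is strictly monotone
for the lexicographic order, so the sorted rotations of `u^p` are the sorted rotations of `u`,
each raised to the power `p` and repeated `p` times. Since `v^p` ends with the same letter as `v`,
`BWT(u^p)` is `BWT(u)` with every letter repeated `p` times. The clustered target word for `u^p`
arises from the one for `u` in the same way, and repeating every letter `p > 0` times is
injective.
-/

theorem wordPow_succ (u : List A) (p : ℕ) : wordPow u (p + 1) = u ++ wordPow u p := by
  simp [wordPow, List.replicate_succ]

theorem wordPow_succ' (u : List A) (p : ℕ) : wordPow u (p + 1) = wordPow u p ++ u := by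
  simp [wordPow, List.replicate_succ']

theorem length_wordPow (u : List A) (p : ℕ) : (wordPow u p).length = p * u.length := by
  simp [wordPow]

theorem count_wordPow [BEq A] (a : A) (u : List A) (p : ℕ) :
    (wordPow u p).count a = p * u.count a := by
  simp [wordPow, List.count_flatten]

theorem getLast?_wordPow (u : List A) {p : ℕ} (hp : 0 < p) :
    (wordPow u p).getLast? = u.getLast? :=
  List.getLast?_flatten_replicate hp.ne' u

theorem append_wordPow_append (x y : List A) (p : ℕ) :
    x ++ wordPow (y ++ x) p = wordPow (x ++ y) p ++ x := by
  induction p with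
  | zero => simp [wordPow]
  | succ p ih => simp [wordPow_succ, ← ih]

theorem rotate_one_wordPow (u : List A) (p : ℕ) :
    (wordPow u p).rotate 1 = wordPow (u.rotate 1) p := by
  rcases u with _ | ⟨a, t⟩
  · simp [wordPow]
  rcases p with _ | p
  · simp [wordPow]
  rw [wordPow_succ, wordPow_succ, List.cons_append, List.rotate_cons_succ, List.rotate_zero,
    List.rotate_cons_succ, List.rotate_zero, List.append_assoc, List.append_assoc,
    ← List.singleton_append, append_wordPow_append]

theorem rotate_wordPow (u : List A) (p i : ℕ) :
    (wordPow u p).rotate i = wordPow (u.rotate i) p := by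
  induction i with
  | zero => simp
  | succ i ih => rw [← List.rotate_rotate, ih, rotate_one_wordPow, List.rotate_rotate]

theorem map_range_mul_of_periodic {β : Type*} {g : ℕ → β} {n : ℕ} (hg : Function.Periodic g n)
    (p : ℕ) : (List.range (p * n)).map g = wordPow ((List.range n).map g) p := by
  induction p with
  | zero => simp [wordPow]
  | succ p ih =>
    rw [Nat.succ_mul, List.range_add, List.map_append, ih, List.map_map, wordPow_succ']
    congr 2
    funext j
    rw [Function.comp_apply, Nat.add_comm]
    exact hg.nat_mul p j

theorem rotations_wordPow (u : List A) (p : ℕ) :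
    rotations (wordPow u p) = wordPow ((rotations u).map (wordPow · p)) p := by
  rw [rotations, rotations, length_wordPow, List.map_map]
  simp only [rotate_wordPow]
  exact map_range_mul_of_periodic
    (fun i => by rw [Nat.add_comm, ← List.rotate_rotate, List.rotate_length]) p

theorem length_of_mem_rotations {u v : List A} (h : v ∈ rotations u) : v.length = u.length := by
  obtain ⟨i, -, rfl⟩ := List.mem_map.1 h
  exact List.length_rotate u i

theorem wordPow_perm_flatMap_replicate (M : List A) (p : ℕ) :
    (wordPow M p).Perm (M.flatMap (List.replicate p)) := by
  classical
  refine List.perm_iff_count.2 fun a => ?_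
  rw [count_wordPow, List.count_flatMap]
  induction M with
  | nil => simp
  | cons b M ih =>
    simp only [List.count_cons, List.map_cons, List.sum_cons, ← ih, Function.comp_apply,
      List.count_replicate]
    split <;> ring

theorem filterMap_flatMap_replicate {β : Type*} (f : A → Option β) (L : List A) (p : ℕ) :
    (L.flatMap (List.replicate p)).filterMap f = (L.filterMap f).flatMap (List.replicate p) := by
  induction L with
  | nil => rfl
  | cons a L ih =>
    rw [List.flatMap_cons, List.filterMap_append, ih, List.filterMap_cons, List.filterMap_replicate]
    cases f a <;> simp

theorem flatMap_replicate_mul {β : Type*} (L : List β) (k : β → ℕ) (f : β → A) (p : ℕ) :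
    L.flatMap (fun c => List.replicate (p * k c) (f c))
      = (L.flatMap fun c => List.replicate (k c) (f c)).flatMap (List.replicate p) := by
  simp [List.flatMap_assoc, List.flatMap_replicate, mul_comm]

theorem flatMap_replicate_injective {p : ℕ} (hp : 0 < p) :
    Function.Injective fun L : List A => L.flatMap (List.replicate p) := by
  obtain ⟨p, rfl⟩ := Nat.exists_eq_add_one_of_ne_zero hp.ne'
  intro L₁
  induction L₁ with
  | nil => rintro (_ | _) h <;> simp_all [List.replicate_succ]
  | cons a L₁ ih =>
    rintro (_ | ⟨b, L₂⟩) h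
    · simp [List.replicate_succ] at h
    · simp only [List.flatMap_cons, List.replicate_succ, List.cons_append,
        List.cons.injEq] at h
      obtain ⟨rfl, h⟩ := h
      rw [ih (List.append_cancel_left h)]

section Sorting
variable {β : Type*} [LinearOrder β]

theorem sortedLE_flatMap_replicate {M : List β} (hM : M.SortedLE) (p : ℕ) :
    (M.flatMap (List.replicate p)).SortedLE := by
  refine List.Pairwise.sortedLE (List.pairwise_flatMap.2 ⟨fun _ _ => ?_, ?_⟩)
  · exact List.pairwise_replicate.2 (Or.inr le_rfl)
  · refine hM.pairwise.imp fun hab x hx y hy => ?_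
    rwa [List.eq_of_mem_replicate hx, List.eq_of_mem_replicate hy]

theorem mergeSort_wordPow (M : List β) (p : ℕ) :
    (wordPow M p).mergeSort (· ≤ ·) = (M.mergeSort (· ≤ ·)).flatMap (List.replicate p) :=
  List.Perm.eq_of_sortedLE List.sortedLE_mergeSort
    (sortedLE_flatMap_replicate List.sortedLE_mergeSort p)
    (((List.mergeSort_perm _ _).trans (wordPow_perm_flatMap_replicate M p)).trans
      ((List.mergeSort_perm _ _).flatMap_right _).symm)

end Sorting

section LexOrder
variable [LinearOrder A]

theorem lexLe_stdLt_eq_true_iff : ∀ {x y : List A}, lexLe stdLt x y = true ↔ x ≤ y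
  | [], [] => by simp [lexLe]
  | [], b :: y => by simpa [lexLe] using (show ([] : List A) < b :: y from List.Lex.nil).le
  | _ :: _, [] => by simp [lexLe]
  | a :: x, b :: y => by
    rcases lt_trichotomy a b with h | rfl | h
    · simpa [lexLe, stdLt, h] using (show a :: x < b :: y from List.Lex.rel h).le
    · simp only [lexLe, stdLt, lt_irrefl, decide_false, Bool.false_eq_true, if_false,
        lexLe_stdLt_eq_true_iff, le_iff_lt_or_eq, List.cons_inj_right]
      exact or_congr_left List.lex_cons_iff.symm
    · simpa [lexLe, stdLt, h, not_lt.2 h.le] using (show b :: y < a :: x from List.Lex.rel h)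

theorem lexLe_stdLt : lexLe (stdLt (A := A)) = fun x y => decide (x ≤ y) := by
  funext x y
  exact Bool.eq_iff_iff.2 (lexLe_stdLt_eq_true_iff.trans decide_eq_true_iff.symm)

theorem append_lt_append_of_length_eq {u v : List A} (h : u < v) (hl : u.length = v.length)
    (x y : List A) : u ++ x < v ++ y := by
  induction h with
  | nil => simp at hl
  | cons _ ih => exact List.Lex.cons (ih (by simpa using hl))
  | rel h => exact List.Lex.rel h

theorem wordPow_lt_wordPow {u v : List A} (h : u < v) (hl : u.length = v.length) {p : ℕ}
    (hp : 0 < p) : wordPow u p < wordPow v p := by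
  obtain ⟨p, rfl⟩ := Nat.exists_eq_add_one_of_ne_zero hp.ne'
  rw [wordPow_succ, wordPow_succ]
  exact append_lt_append_of_length_eq h hl _ _

theorem strictMonoOn_wordPow (n : ℕ) {p : ℕ} (hp : 0 < p) :
    StrictMonoOn (wordPow · p) {u : List A | u.length = n} :=
  fun _ hu _ hv h => wordPow_lt_wordPow h (hu.trans hv.symm) hp

theorem bwt_wordPow (u : List A) {p : ℕ} (hp : 0 < p) :
    bwt (wordPow u p) = (bwt u).flatMap (List.replicate p) := by
  have hmono : ∀ v ∈ rotations u, ∀ w ∈ rotations u,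
      decide (v ≤ w) = decide (wordPow v p ≤ wordPow w p) := fun v hv w hw =>
    decide_eq_decide.2 ((strictMonoOn_wordPow u.length hp).le_iff_le
      (length_of_mem_rotations hv) (length_of_mem_rotations hw)).symm
  rw [bwt, bwtBy, bwt, bwtBy, lexLe_stdLt, rotations_wordPow, mergeSort_wordPow,
    ← List.map_mergeSort hmono, filterMap_flatMap_replicate, List.filterMap_map]
  congr 2
  funext v
  exact getLast?_wordPow v hp

end LexOrder

theorem clustering_pow_iff_general [Fintype A] [LinearOrder A] (π : Equiv.Perm A)
    (u : List A) (p : ℕ) (hp : 1 ≤ p) :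
    IsClustering π (wordPow u p) ↔ IsClustering π u := by
  rw [IsClustering, IsClusteringBy, IsClustering, IsClusteringBy, ← bwt, ← bwt, bwt_wordPow u hp]
  simp only [count_wordPow]
  rw [flatMap_replicate_mul]
  exact (flatMap_replicate_injective hp).eq_iff

/-- Let `w = u^p` with `u` primitive. Then `w` is `π`-clustering iff `u` is. -/
theorem clustering_pow_iff [Fintype A] [LinearOrder A] (π : Equiv.Perm A)
    (u : List A) (p : ℕ) (hp : 1 ≤ p) (hu : Primitive u) :
    IsClustering π (wordPow u p) ↔ IsClustering π u :=
  clustering_pow_iff_general π u p hp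

end BWTpaper
end

section
/- Let w be a primitive π-clustering word over A = {a_1 < ... < a_d}. Suppose b = a_d, π⁻¹(b) = a_i and π⁻¹(a) = a_{i+1} for some 1 ≤ i < d. Then α_{a,b}(w) is π'-clustering over A for some permutation π' of A, where α_{a,b} sends a to ab and fixes all other letters. -/
namespace List

variable {α β : Type*}

theorem flatMap_cons_perm (l : List α) (f : α → β) (g : α → List β) :
    (l.flatMap fun x => f x :: g x).Perm (l.map f ++ l.flatMap g) := by
  induction l with
  | nil => rfl
  | cons x l ih =>
    simp only [flatMap_cons, map_cons, cons_append]
    exact (ih.append_left _).trans (perm_append_comm_assoc _ _ _) |>.cons _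

theorem flatMap_ite_singleton (l : List α) (p : α → Prop) [DecidablePred p] (f : α → β) :
    l.flatMap (fun x => if p x then [f x] else []) = (l.filter (p ·)).map f := by
  induction l with
  | nil => rfl
  | cons x l ih => by_cases h : p x <;> simp [h, ih]

theorem Pairwise.rel_of_filterMap_eq_append {r : α → α → Prop} {l : List α} (hl : l.Pairwise r)
    {f : α → Option β} {L₁ L₂ : List β} (h : l.filterMap f = L₁ ++ L₂) {x y : α} (hx : x ∈ l)
    (hy : y ∈ l) {c c' : β} (hxc : f x = some c) (hyc : f y = some c') (hc : c ∉ L₂)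
    (hc' : c' ∉ L₁) : r x y := by
  obtain ⟨l₁, l₂, rfl, rfl, rfl⟩ := filterMap_eq_append_iff.mp h
  have hx₁ : x ∈ l₁ := (mem_append.mp hx).resolve_right fun hx₂ =>
    hc (mem_filterMap.mpr ⟨x, hx₂, hxc⟩)
  have hy₂ : y ∈ l₂ := (mem_append.mp hy).resolve_left fun hy₁ =>
    hc' (mem_filterMap.mpr ⟨y, hy₁, hyc⟩)
  exact (pairwise_append.mp hl).2.2 x hx₁ y hy₂

theorem exists_perm_map_eq [DecidableEq α] {l l' : List α} (hnd : l.Nodup) (hmem : ∀ x, x ∈ l)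
    (h : l.Perm l') : ∃ σ : Equiv.Perm α, l.map σ = l' := by
  let e := hnd.getEquivOfForallMemList l hmem
  let e' := (h.nodup_iff.mp hnd).getEquivOfForallMemList l' fun x => h.subset (hmem x)
  refine ⟨e.symm.trans ((finCongr h.length_eq).trans e'), ext_getElem (by simp [h.length_eq]) ?_⟩
  intro k hk hk'
  have hkl : k < l.length := by simpa using hk
  have : e.symm l[k] = ⟨k, hkl⟩ := e.symm_apply_eq.mpr rfl
  simp [this, e']

theorem eq_take_append_cons_cons_drop {l : List α} {i : ℕ} (hi : i + 1 < l.length) :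
    l = l.take i ++ l[i] :: l[i + 1] :: l.drop (i + 2) := by
  rw [← drop_eq_getElem_cons, ← drop_eq_getElem_cons, take_append_drop]

section LinearOrder

variable [LinearOrder α]

theorem cons_le_cons_iff_left (x : α) {s t : List α} : x :: s ≤ x :: t ↔ s ≤ t := by
  simp [le_iff_lt_or_eq]

theorem append_lt_append_of_lt {s t : List α} (hlen : s.length = t.length) (hst : s < t)
    (u v : List α) : s ++ u < t ++ v := by
  induction s generalizing t with
  | nil => cases t <;> simp_all
  | cons x s ih =>
    obtain _ | ⟨y, t⟩ := t
    · simp at hlen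
    rw [cons_lt_cons_iff] at hst
    rw [cons_append, cons_append, cons_lt_cons_iff]
    exact hst.imp_right fun h => ⟨h.1, ih (by simpa using hlen) h.2⟩

theorem lt_of_append_singleton_le_append_singleton {s t : List α} {c c' : α}
    (hlen : s.length = t.length) (hc : c' < c) (h : s ++ [c] ≤ t ++ [c']) : s < t := by
  rcases lt_trichotomy s t with hst | rfl | hts
  · exact hst
  · have : s ++ [c'] < s ++ [c] := Lex.append_left _ (cons_lt_cons_iff.mpr (Or.inl hc)) s
    exact absurd h this.not_ge
  · exact absurd h (append_lt_append_of_lt hlen.symm hts _ _).not_ge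

end LinearOrder

end List

namespace BWTpaper

variable {A : Type*}

theorem lexLe_stdLt_s7 [LinearOrder A] : ∀ u v : List A, lexLe stdLt u v = decide (u ≤ v)
  | [], [] => by simp [lexLe]
  | [], _ :: _ => by simp [lexLe, le_iff_lt_or_eq, List.nil_lt_cons]
  | _ :: _, [] => by simp [lexLe]
  | x :: u, y :: v => by
    rw [lexLe, lexLe_stdLt_s7 u v]
    simp only [le_iff_lt_or_eq, List.cons_lt_cons_iff, List.cons.injEq]
    rcases lt_trichotomy x y with h | rfl | h
    · simp [stdLt, h]
    · simp [stdLt]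
    · simp [stdLt, h, h.not_gt, h.ne']

section AlphaM

variable [DecidableEq A] (a b : A)

theorem alphaM_append (u v : List A) : alphaM a b (u ++ v) = alphaM a b u ++ alphaM a b v :=
  List.flatMap_append

theorem alphaM_cons (c : A) (u : List A) :
    alphaM a b (c :: u) = c :: ((if c = a then [b] else []) ++ alphaM a b u) := by
  by_cases h : c = a <;> simp [alphaM, h]

theorem length_alphaM (w : List A) : (alphaM a b w).length = w.length + w.count a := by
  induction w with
  | nil => rfl
  | cons c w ih =>
    rw [alphaM_cons, List.length_cons, List.length_append, ih, List.count_cons]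
    by_cases h : c = a <;> simp [h] <;> omega

theorem count_alphaM {a b : A} (hab : a ≠ b) (c : A) (w : List A) :
    (alphaM a b w).count c = w.count c + if c = b then w.count a else 0 := by
  induction w with
  | nil => simp [alphaM]
  | cons d w ih =>
    rw [alphaM_cons, List.count_cons, List.count_append, ih, List.count_cons, List.count_cons]
    by_cases hd : d = a <;> by_cases hc : c = b <;> subst_vars <;>
      simp [Ne.symm, *] <;> (try split_ifs) <;> omega

theorem getLast?_alphaM (w : List A) :
    (alphaM a b w).getLast? = w.getLast?.map fun c => if c = a then b else c := by
  rcases w.eq_nil_or_concat with rfl | ⟨u, c, rfl⟩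
  · rfl
  · by_cases h : c = a <;> simp [alphaM, h]

end AlphaM

section AlphaMOrder

variable [LinearOrder A] (a b : A)

theorem alphaM_append_lt_alphaM_append {p q : List A} (hlen : p.length = q.length) (hpq : p < q)
    (x y : List A) : alphaM a b p ++ x < alphaM a b q ++ y := by
  induction p generalizing q with
  | nil => cases q <;> simp_all
  | cons c p ih =>
    obtain _ | ⟨c', q⟩ := q
    · simp at hlen
    rcases List.cons_lt_cons_iff.mp hpq with hc | ⟨rfl, hpq'⟩
    · rw [alphaM_cons, alphaM_cons, List.cons_append, List.cons_append]
      exact List.cons_lt_cons_iff.mpr (Or.inl hc)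
    · change alphaM a b ([c] ++ p) ++ x < alphaM a b ([c] ++ q) ++ y
      rw [alphaM_append, alphaM_append, List.append_assoc, List.append_assoc]
      exact List.Lex.append_left _ (ih (by simpa using hlen) hpq') _

theorem alphaM_append_le_alphaM_append {p q : List A} (hlen : p.length = q.length) (hpq : p ≤ q)
    (x : List A) : alphaM a b p ++ x ≤ alphaM a b q ++ x := by
  rcases le_iff_lt_or_eq.mp hpq with hpq | rfl
  · exact (alphaM_append_lt_alphaM_append a b hlen hpq x x).le
  · exact le_rfl

end AlphaMOrder

section Rotations

theorem mem_rotations {w r : List A} : r ∈ rotations w ↔ ∃ t < w.length, w.rotate t = r := by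
  simp [rotations]

theorem length_rotations (w : List A) : (rotations w).length = w.length := by
  simp [rotations]

theorem length_of_mem_rotations_s7 {w r : List A} (h : r ∈ rotations w) : r.length = w.length := by
  obtain ⟨t, -, rfl⟩ := mem_rotations.mp h
  exact List.length_rotate w t

theorem rotate_one_mem_rotations {w r : List A} (h : r ∈ rotations w) :
    r.rotate 1 ∈ rotations w := by
  obtain ⟨t, ht, rfl⟩ := mem_rotations.mp h
  exact mem_rotations.mpr ⟨(t + 1) % w.length, Nat.mod_lt _ (by omega), by
    rw [List.rotate_mod, List.rotate_rotate]⟩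

variable [DecidableEq A] (a b : A)

/-- The rotation of `alphaM a b w` that starts inside the image `ab` of the first letter of a
rotation `r = a :: s` of `w`. -/
def splitRotation (r : List A) : List A := b :: (alphaM a b r.tail ++ [a])

variable (w : List A)

theorem rotate_length_alphaM_take {t : ℕ} (ht : t ≤ w.length) :
    (alphaM a b w).rotate (alphaM a b (w.take t)).length = alphaM a b (w.rotate t) := by
  have himage : alphaM a b w = alphaM a b (w.take t) ++ alphaM a b (w.drop t) := by
    rw [← alphaM_append, List.take_append_drop]
  rw [himage, List.rotate_append_length_eq, List.rotate_eq_drop_append_take ht, alphaM_append]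

theorem rotate_length_alphaM_take_add_one {t : ℕ} (ht : t < w.length) (hta : w[t] = a) :
    (alphaM a b w).rotate ((alphaM a b (w.take t)).length + 1) =
      splitRotation a b (w.rotate t) := by
  have hsplit : w = w.take t ++ a :: w.drop (t + 1) := by
    rw [← hta, ← List.drop_eq_getElem_cons ht, List.take_append_drop]
  have himage :
      alphaM a b w = (alphaM a b (w.take t) ++ [a]) ++ b :: alphaM a b (w.drop (t + 1)) := by
    conv_lhs => rw [hsplit]
    simp [alphaM_append, alphaM_cons]
  have hrot : w.rotate t = a :: (w.drop (t + 1) ++ w.take t) := by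
    rw [List.rotate_eq_drop_append_take ht.le, List.drop_eq_getElem_cons ht, hta, List.cons_append]
  have hlen : (alphaM a b (w.take t) ++ [a]).length = (alphaM a b (w.take t)).length + 1 := by
    simp
  rw [himage, ← hlen, List.rotate_append_length_eq, hrot, splitRotation]
  simp [alphaM_append]

-- The positions of `alphaM a b w` are the starts of the images of the letters of `w`, together
-- with the second position of each image `ab`.
theorem range_length_alphaM_take : ∀ k ≤ w.length,
    List.range (alphaM a b (w.take k)).length =
      (List.range k).flatMap fun t => (alphaM a b (w.take t)).length ::
        if w[t]? = some a then [(alphaM a b (w.take t)).length + 1] else []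
  | 0, _ => rfl
  | k + 1, hk => by
    have hkw : k < w.length := hk
    rw [List.range_succ, List.flatMap_append, ← range_length_alphaM_take k hkw.le,
      List.take_add_one, List.getElem?_eq_getElem hkw, alphaM_append]
    by_cases h : w[k] = a <;> simp [alphaM, h, List.range_succ, List.getElem?_eq_getElem hkw]

theorem rotations_alphaM_perm :
    (rotations (alphaM a b w)).Perm ((rotations w).map (alphaM a b) ++
      ((rotations w).filter (·.head? = some a)).map (splitRotation a b)) := by
  have hblocks : rotations (alphaM a b w) = (List.range w.length).flatMap fun t =>
      alphaM a b (w.rotate t) ::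
        if w[t]? = some a then [splitRotation a b (w.rotate t)] else [] := by
    rw [rotations, ← List.take_length (l := w), range_length_alphaM_take a b w _ le_rfl,
      List.take_length, List.map_flatMap]
    refine List.flatMap_congr fun t ht => ?_
    have ht : t < w.length := List.mem_range.mp ht
    rw [List.getElem?_eq_getElem ht]
    by_cases h : w[t] = a
    · simp [h, rotate_length_alphaM_take a b w ht.le,
        rotate_length_alphaM_take_add_one a b w ht h]
    · simp [h, rotate_length_alphaM_take a b w ht.le]
  have hsplit : ((rotations w).filter (·.head? = some a)).map (splitRotation a b) =
      (List.range w.length).flatMap fun t =>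
        if w[t]? = some a then [splitRotation a b (w.rotate t)] else [] := by
    rw [List.flatMap_ite_singleton, rotations, List.filter_map, List.map_map]
    congr 1
    exact List.filter_congr fun t ht => by simp [List.head?_rotate (List.mem_range.mp ht)]
  rw [hblocks, hsplit, rotations, List.map_map]
  exact List.flatMap_cons_perm _ _ _

end Rotations

section BWT

variable [LinearOrder A]

theorem mergeSort_lexLe_stdLt (l : List (List A)) :
    l.mergeSort (lexLe stdLt) = l.mergeSort fun u v => decide (u ≤ v) := by
  rw [show lexLe (stdLt (A := A)) = fun u v => decide (u ≤ v) from funext₂ lexLe_stdLt_s7]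

theorem bwtBy_stdLt_eq_filterMap {w : List A} {S : List (List A)} (hperm : S.Perm (rotations w))
    (hS : S.Pairwise (· ≤ ·)) : bwtBy stdLt w = S.filterMap List.getLast? := by
  rw [bwtBy, mergeSort_lexLe_stdLt, ((List.mergeSort_perm _ _).trans hperm.symm).eq_of_pairwise'
    (List.pairwise_mergeSort' _ _) hS]

theorem le_of_bwtBy_stdLt_eq_append {w X Y : List A} (h : bwtBy stdLt w = X ++ Y)
    {x y : List A} (hx : x ∈ rotations w) (hy : y ∈ rotations w) {c c' : A}
    (hxc : x.getLast? = some c) (hyc : y.getLast? = some c') (hc : c ∉ Y) (hc' : c' ∉ X) :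
    x ≤ y := by
  rw [bwtBy, mergeSort_lexLe_stdLt] at h
  have hperm := (List.mergeSort_perm (rotations w) fun u v => decide (u ≤ v)).symm
  exact (List.pairwise_mergeSort' _ _).rel_of_filterMap_eq_append h (hperm.subset hx)
    (hperm.subset hy) hxc hyc hc hc'

variable {a b : A}

theorem alphaM_cons_le_splitRotation (hab : a ≠ b) (hb : ∀ c, c ≤ b) {c : A} {t s : List A}
    (hlen : t.length = s.length) (hkey : c = b → t ++ [b] ≤ s ++ [a]) :
    alphaM a b (c :: t) ≤ splitRotation a b (a :: s) := by
  rw [alphaM_cons, splitRotation, List.tail_cons]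
  rcases (hb c).lt_or_eq with hc | hcb
  · exact (List.cons_lt_cons_iff.mpr (Or.inl hc)).le
  · obtain rfl : b = c := hcb.symm
    have hts := List.lt_of_append_singleton_le_append_singleton hlen
      ((hb a).lt_of_ne hab) (hkey rfl)
    rw [if_neg hab.symm, List.nil_append]
    have := alphaM_append_lt_alphaM_append a b hlen hts [] [a]
    rw [List.append_nil] at this
    exact (List.cons_lt_cons_iff.mpr (Or.inr ⟨rfl, this⟩)).le

theorem pairwise_alphaM_append_splitRotation (hab : a ≠ b) (hb : ∀ c, c ≤ b)
    {R : List (List A)} (hR : R.Pairwise (· ≤ ·))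
    (hlen : ∀ r ∈ R, ∀ s ∈ R, r.length = s.length) (hrot : ∀ r ∈ R, r.rotate 1 ∈ R)
    (hkey : ∀ r ∈ R, ∀ s ∈ R, r.getLast? = some b → s.getLast? = some a → r ≤ s) :
    (R.map (alphaM a b) ++
      (R.filter (·.head? = some a)).map (splitRotation a b)).Pairwise (· ≤ ·) := by
  refine List.pairwise_append.mpr ⟨?_, ?_, ?_⟩
  · refine List.pairwise_map.mpr ((List.Pairwise.and_mem.mp hR).imp ?_)
    rintro r s ⟨hr, hs, hrs⟩
    simpa using alphaM_append_le_alphaM_append a b (hlen r hr s hs) hrs []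
  · refine List.pairwise_map.mpr ((List.Pairwise.and_mem.mp (hR.filter _)).imp ?_)
    rintro r s ⟨hr, hs, hrs⟩
    obtain ⟨hr, hra⟩ := List.mem_filter.mp hr
    obtain ⟨hs, hsa⟩ := List.mem_filter.mp hs
    obtain ⟨r, rfl⟩ : ∃ r', r = a :: r' := by simpa [List.head?_eq_some_iff] using hra
    obtain ⟨s, rfl⟩ : ∃ s', s = a :: s' := by simpa [List.head?_eq_some_iff] using hsa
    rw [List.cons_le_cons_iff_left] at hrs
    rw [splitRotation, splitRotation, List.tail_cons, List.tail_cons, List.cons_le_cons_iff_left]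
    exact alphaM_append_le_alphaM_append a b (by simpa using hlen _ hr _ hs) hrs [a]
  · intro x hx y hy
    obtain ⟨r, hr, rfl⟩ := List.mem_map.mp hx
    obtain ⟨s, hs, rfl⟩ := List.mem_map.mp hy
    obtain ⟨hs, hsa⟩ := List.mem_filter.mp hs
    obtain ⟨s, rfl⟩ : ∃ s', s = a :: s' := by simpa [List.head?_eq_some_iff] using hsa
    obtain _ | ⟨c, t⟩ := r
    · simpa using hlen _ hr _ hs
    refine alphaM_cons_le_splitRotation hab hb (by simpa using hlen _ hr _ hs) fun hcb => ?_
    subst hcb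
    simpa using hkey _ (hrot _ hr) _ (hrot _ hs) (by simp) (by simp)

theorem bwtBy_stdLt_alphaM (hab : a ≠ b) (hb : ∀ c, c ≤ b) {w : List A}
    (hkey : ∀ x ∈ rotations w, ∀ y ∈ rotations w,
      x.getLast? = some b → y.getLast? = some a → x ≤ y) :
    bwtBy stdLt (alphaM a b w) =
      (bwtBy stdLt w).map (fun c => if c = a then b else c) ++ List.replicate (w.count a) a := by
  set R := (rotations w).mergeSort fun u v => decide (u ≤ v)
  have hR : R.Perm (rotations w) := List.mergeSort_perm _ _
  set E := R.filter (·.head? = some a)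
  have hperm : (R.map (alphaM a b) ++ E.map (splitRotation a b)).Perm (rotations (alphaM a b w)) :=
    ((hR.map _).append ((hR.filter _).map _)).trans (rotations_alphaM_perm a b w).symm
  have hsorted : (R.map (alphaM a b) ++ E.map (splitRotation a b)).Pairwise (· ≤ ·) :=
    pairwise_alphaM_append_splitRotation hab hb (List.pairwise_mergeSort' _ _)
      (fun r hr s hs => by
        rw [length_of_mem_rotations_s7 (hR.subset hr), length_of_mem_rotations_s7 (hR.subset hs)])
      (fun r hr => hR.symm.subset (rotate_one_mem_rotations (hR.subset hr)))
      (fun r hr s hs => hkey r (hR.subset hr) s (hR.subset hs))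
  have hE : E.length = w.count a := by
    have := hperm.length_eq
    simp only [List.length_append, List.length_map, hR.length_eq, length_rotations,
      length_alphaM] at this
    omega
  rw [bwtBy_stdLt_eq_filterMap hperm hsorted, bwtBy, mergeSort_lexLe_stdLt, List.filterMap_append,
    List.filterMap_map, List.filterMap_map, List.map_filterMap]
  congr 1
  · exact List.filterMap_congr fun r _ => getLast?_alphaM a b r
  · have hlast : List.getLast? ∘ splitRotation a b = some ∘ fun _ => a := by
      funext r
      rw [Function.comp_apply, splitRotation, ← List.cons_append, List.getLast?_concat]
      rfl
    rw [hlast, List.filterMap_eq_map, List.map_const', hE]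

end BWT

section BlockWord

def blockWord (l : List A) (n : A → ℕ) : List A := l.flatMap fun c => List.replicate (n c) c

theorem blockWord_append (l l' : List A) (n : A → ℕ) :
    blockWord (l ++ l') n = blockWord l n ++ blockWord l' n :=
  List.flatMap_append

theorem blockWord_cons (c : A) (l : List A) (n : A → ℕ) :
    blockWord (c :: l) n = List.replicate (n c) c ++ blockWord l n :=
  List.flatMap_cons

theorem mem_of_mem_blockWord {l : List A} {n : A → ℕ} {c : A} (h : c ∈ blockWord l n) : c ∈ l := by
  obtain ⟨c', hc', hc⟩ := List.mem_flatMap.mp h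
  rwa [List.eq_of_mem_replicate hc]

theorem blockWord_congr {l : List A} {n m : A → ℕ} (h : ∀ c ∈ l, n c = m c) :
    blockWord l n = blockWord l m :=
  List.flatMap_congr fun c hc => by rw [h c hc]

theorem map_blockWord_eq_blockWord {l : List A} {f : A → A} (hf : ∀ c ∈ l, f c = c)
    {n m : A → ℕ} (h : ∀ c ∈ l, n c = m c) : (blockWord l n).map f = blockWord l m := by
  rw [List.map_congr_left fun c hc => hf c (mem_of_mem_blockWord hc), List.map_id',
    blockWord_congr h]

theorem map_blockWord_append_replicate [DecidableEq A] {a b : A} {P Q : List A}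
    (ha : a ∉ P ++ Q) {n m : A → ℕ} (hm : ∀ c ∈ P ++ Q, n c = m c) (hmb : m b = n b + n a)
    (hma : m a = n a) :
    (blockWord (P ++ b :: a :: Q) n).map (fun c => if c = a then b else c) ++
      List.replicate (n a) a = blockWord (P ++ b :: Q ++ [a]) m := by
  have hf : ∀ c ∈ P ++ Q, (if c = a then b else c) = c := fun c hc =>
    if_neg fun hca : c = a => ha (hca ▸ hc)
  have hP := map_blockWord_eq_blockWord (l := P) (fun c hc => hf c (List.mem_append_left Q hc))
    (fun c hc => hm c (List.mem_append_left Q hc)) (n := n) (m := m)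
  have hQ := map_blockWord_eq_blockWord (l := Q) (fun c hc => hf c (List.mem_append_right P hc))
    (fun c hc => hm c (List.mem_append_right P hc)) (n := n) (m := m)
  simp only [blockWord_append, blockWord_cons, List.map_append, hP, hQ, List.map_replicate,
    if_pos, ite_self, hmb, hma]
  rw [← List.replicate_append_replicate]
  simp only [blockWord, List.flatMap_nil, List.append_nil, List.append_assoc]

theorem le_of_bwtBy_stdLt_eq_blockWord [LinearOrder A] {w P Q : List A} {a b : A} {n : A → ℕ}
    (h : bwtBy stdLt w = blockWord (P ++ b :: a :: Q) n) (hab : a ≠ b) (haP : a ∉ P)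
    (hbQ : b ∉ Q) (x : List A) (hx : x ∈ rotations w) (y : List A) (hy : y ∈ rotations w)
    (hxb : x.getLast? = some b) (hya : y.getLast? = some a) : x ≤ y := by
  refine le_of_bwtBy_stdLt_eq_append (X := blockWord P n ++ List.replicate (n b) b)
    (Y := List.replicate (n a) a ++ blockWord Q n) ?_ hx hy hxb hya ?_ ?_
  · rw [h, blockWord_append, blockWord_cons, blockWord_cons, List.append_assoc]
  · simp only [List.mem_append, List.mem_replicate, not_or]
    exact ⟨fun h => hab h.2.symm, fun h => hbQ (mem_of_mem_blockWord h)⟩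
  · simp only [List.mem_append, List.mem_replicate, not_or]
    exact ⟨fun h => haP (mem_of_mem_blockWord h), fun h => hab h.2⟩

end BlockWord

section Clustering

variable [Fintype A]

theorem nodup_sortedAlphabet (lt : A → A → Bool) : (sortedAlphabet lt).Nodup :=
  (List.mergeSort_perm _ _).nodup_iff.mpr (Finset.nodup_toList _)

theorem mem_sortedAlphabet (lt : A → A → Bool) (c : A) : c ∈ sortedAlphabet lt :=
  (List.mergeSort_perm _ _).symm.subset (Finset.mem_toList.mpr (Finset.mem_univ c))

variable [LinearOrder A]

theorem isClustering_iff {π : Equiv.Perm A} {w : List A} :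
    IsClustering π w ↔ bwtBy stdLt w = blockWord ((sortedAlphabet stdLt).map π) (w.count ·) := by
  rw [IsClustering, IsClusteringBy, blockWord, List.flatMap_map]

theorem exists_isClustering_of_perm {π : Equiv.Perm A} {w L : List A}
    (hL : ((sortedAlphabet stdLt).map π).Perm L) (h : bwtBy stdLt w = blockWord L (w.count ·)) :
    ∃ π' : Equiv.Perm A, IsClustering π' w := by
  obtain ⟨σ, hσ⟩ := List.exists_perm_map_eq ((nodup_sortedAlphabet _).map π.injective)
    (fun c => List.mem_map.mpr ⟨π.symm c, mem_sortedAlphabet _ _, π.apply_symm_apply c⟩) hL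
  refine ⟨π.trans σ, isClustering_iff.mpr ?_⟩
  rw [h, ← hσ, List.map_map]
  rfl

theorem exists_isClustering_alphaM {π : Equiv.Perm A} {w : List A} (hcl : IsClustering π w)
    {a b : A} (hb : ∀ c, c ≤ b) {P Q : List A}
    (hPQ : (sortedAlphabet stdLt).map π = P ++ b :: a :: Q) :
    ∃ π' : Equiv.Perm A, IsClustering π' (alphaM a b w) := by
  have hnd := hPQ ▸ (nodup_sortedAlphabet stdLt).map π.injective
  rw [List.nodup_middle, List.nodup_cons, List.nodup_middle, List.nodup_cons] at hnd
  simp only [List.mem_append, List.mem_cons, not_or] at hnd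
  obtain ⟨⟨hbP, hba, hbQ⟩, ⟨haP, haQ⟩, -⟩ := hnd
  have hab : a ≠ b := Ne.symm hba
  rw [isClustering_iff, hPQ] at hcl
  refine exists_isClustering_of_perm (π := π) (L := P ++ b :: Q ++ [a]) ?_ ?_
  · rw [hPQ, List.append_assoc]
    exact ((List.perm_append_singleton a Q).symm.cons b).append_left P
  · rw [bwtBy_stdLt_alphaM hab hb (le_of_bwtBy_stdLt_eq_blockWord hcl hab haP hbQ), hcl]
    refine map_blockWord_append_replicate (by simp [haP, haQ]) (fun c hc => ?_) ?_ ?_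
    · have hcb : c ≠ b := by rintro rfl; simp_all
      simp [count_alphaM hab, hcb]
    · simp [count_alphaM hab]
    · simp [count_alphaM hab, hab]

end Clustering

theorem sortedAlphabet_stdLt_fin (d : ℕ) :
    sortedAlphabet (stdLt (A := Fin d)) = List.finRange d := by
  have hle : (fun x y : Fin d => !stdLt y x) = fun x y => decide (x ≤ y) := by
    funext x y
    simp only [stdLt, ← not_lt, decide_not]
  rw [sortedAlphabet, hle]
  refine List.Perm.eq_of_pairwise' (List.pairwise_mergeSort' _ _)
    ((List.pairwise_lt_finRange d).imp le_of_lt) ?_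
  exact (List.mergeSort_perm _ _).trans (List.perm_of_nodup_nodup_toFinset_eq
    (Finset.nodup_toList _) (List.nodup_finRange d) (by ext; simp))

theorem clustering_alpha_lastLetter_general (d : ℕ) (π : Equiv.Perm (Fin d)) (a b : Fin d)
    (w : List (Fin d)) (hcl : IsClustering π w)
    (i : Fin d) (hi : (i : ℕ) + 1 < d)
    (hb : (b : ℕ) = d - 1) (hib : π.symm b = i) (hia : π.symm a = ⟨(i : ℕ) + 1, hi⟩) :
    ∃ π' : Equiv.Perm (Fin d), IsClustering π' (alphaM a b w) := by
  have hlen : (i : ℕ) + 1 < ((sortedAlphabet stdLt).map π).length := by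
    simpa [sortedAlphabet_stdLt_fin] using hi
  have hLb : ((sortedAlphabet stdLt).map π)[(i : ℕ)] = b := by
    simp [sortedAlphabet_stdLt_fin, ← hib]
  have hLa : ((sortedAlphabet stdLt).map π)[(i : ℕ) + 1] = a := by
    simp [sortedAlphabet_stdLt_fin, ← hia]
  have hsplit := List.eq_take_append_cons_cons_drop hlen
  rw [hLb, hLa] at hsplit
  exact exists_isClustering_alphaM hcl (fun c => Fin.le_def.mpr (by omega)) hsplit

/-- Lemma (case 3): if `w` is primitive and `π`-clustering over `A = {a₁ < ⋯ < a_d}`,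
`b = a_d`, `π⁻¹(b) = a_i` and `π⁻¹(a) = a_{i+1}` with `1 ≤ i < d`, then `α_{a,b}(w)` is
`π'`-clustering over `A` for some permutation `π'`. -/
theorem clustering_alpha_lastLetter (d : ℕ) (π : Equiv.Perm (Fin d)) (a b : Fin d)
    (hab : a ≠ b) (w : List (Fin d)) (hprim : Primitive w) (hcl : IsClustering π w)
    (i : Fin d) (hi : (i : ℕ) + 1 < d)
    (hb : (b : ℕ) = d - 1) (hib : π.symm b = i) (hia : π.symm a = ⟨(i : ℕ) + 1, hi⟩) :
    ∃ π' : Equiv.Perm (Fin d), IsClustering π' (alphaM a b w) :=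
  clustering_alpha_lastLetter_general d π a b w hcl i hi hb hib hia

end BWTpaper
end
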